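/- Let m > 0 and q ∈ ℝ³. The commutative second-order integrand f_q is nonnegative on ℝ³ but is NOT integrable on ℝ³ (its integral diverges); i.e. the second-order energy correction of the commutative φ³ theory is ultraviolet divergent. -/
import Mathlib


open MeasureTheory

/-- Euclidean three-space. -/
abbrev R3 := EuclideanSpace ℝ (Fin 3)

/-- The one-particle energy `ω(p) = √(‖p‖² + m²)` for `p ∈ ℝ³`. -/
noncomputable def ω3 (m : ℝ) (p : R3) : ℝ := Real.sqrt (‖p‖ ^ 2 + m ^ 2)

/-- Integrand of the second-order energy correction of the commutative
`φ³` theory. -/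
noncomputable def fC (m : ℝ) (q p : R3) : ℝ :=
  1 / (8 * (2 * Real.pi) ^ 6) * (ω3 m p + ω3 m (p + q)) /
    (ω3 m p * ω3 m (p + q) * ω3 m q * ((ω3 m p + ω3 m (p + q)) ^ 2 - (ω3 m q) ^ 2))

lemma omega_sq (m : ℝ) (hm : 0 ≤ m) (p : R3) : (ω3 m p) ^ 2 = ‖p‖ ^ 2 + m ^ 2 :=
  Real.sq_sqrt (by positivity)

lemma norm_le_omega (m : ℝ) (p : R3) : ‖p‖ ≤ ω3 m p := by
  have := Real.sqrt_le_sqrt (show ‖p‖ ^ 2 ≤ ‖p‖ ^ 2 + m ^ 2 by nlinarith [sq_nonneg m])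
  rwa [Real.sqrt_sq (norm_nonneg p)] at this

lemma m_le_omega (m : ℝ) (hm : 0 ≤ m) (p : R3) : m ≤ ω3 m p := by
  have := Real.sqrt_le_sqrt (show m ^ 2 ≤ ‖p‖ ^ 2 + m ^ 2 by nlinarith [sq_nonneg ‖p‖])
  rwa [Real.sqrt_sq hm] at this

lemma omega_le (m : ℝ) (hm : 0 ≤ m) (p : R3) : ω3 m p ≤ ‖p‖ + m := by
  have h : ‖p‖ ^ 2 + m ^ 2 ≤ (‖p‖ + m) ^ 2 := by nlinarith [norm_nonneg p]
  calc ω3 m p ≤ Real.sqrt ((‖p‖ + m) ^ 2) := Real.sqrt_le_sqrt h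
    _ = ‖p‖ + m := Real.sqrt_sq (by positivity)

lemma omega_triangle (m : ℝ) (hm : 0 < m) (q p : R3) :
    ω3 m q < ω3 m p + ω3 m (p + q) := by
  have hA := norm_le_omega m p
  have hB := norm_le_omega m (p + q)
  have hA2 := omega_sq m hm.le p
  have hB2 := omega_sq m hm.le (p + q)
  have hC2 := omega_sq m hm.le q
  have hC0 : 0 ≤ ω3 m q := (norm_nonneg q).trans (norm_le_omega m q)
  have hA0 : 0 ≤ ω3 m p := (norm_nonneg p).trans hA
  have hB0 : 0 ≤ ω3 m (p + q) := (norm_nonneg (p + q)).trans hB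
  have hq : ‖q‖ ≤ ‖p + q‖ + ‖p‖ := by
    simpa [add_sub_cancel_left] using norm_sub_le (p + q) p
  have hq2 : ‖q‖ ^ 2 ≤ (‖p + q‖ + ‖p‖) ^ 2 :=
    pow_le_pow_left₀ (norm_nonneg q) hq 2
  have hab : ‖p‖ * ‖p + q‖ ≤ ω3 m p * ω3 m (p + q) :=
    mul_le_mul hA hB (norm_nonneg _) hA0
  have hsq : (ω3 m q) ^ 2 < (ω3 m p + ω3 m (p + q)) ^ 2 := by
    nlinarith [pow_pos hm 2]
  exact lt_of_pow_lt_pow_left₀ 2 (by linarith) hsq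

lemma denom_pos (m : ℝ) (hm : 0 < m) (q p : R3) :
    0 < ω3 m p * ω3 m (p + q) * ω3 m q *
      ((ω3 m p + ω3 m (p + q)) ^ 2 - (ω3 m q) ^ 2) := by
  have hA : 0 < ω3 m p := lt_of_lt_of_le hm (m_le_omega m hm.le p)
  have hB : 0 < ω3 m (p + q) := lt_of_lt_of_le hm (m_le_omega m hm.le (p + q))
  have hC : 0 < ω3 m q := lt_of_lt_of_le hm (m_le_omega m hm.le q)
  have hk := omega_triangle m hm q p
  have hlast : 0 < (ω3 m p + ω3 m (p + q)) ^ 2 - (ω3 m q) ^ 2 :=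
    sub_pos.mpr (pow_lt_pow_left₀ hk hC.le two_ne_zero)
  exact mul_pos (mul_pos (mul_pos hA hB) hC) hlast

lemma fC_pos (m : ℝ) (hm : 0 < m) (q p : R3) : 0 < fC m q p := by
  have hA : 0 < ω3 m p := lt_of_lt_of_le hm (m_le_omega m hm.le p)
  have hB : 0 < ω3 m (p + q) := lt_of_lt_of_le hm (m_le_omega m hm.le (p + q))
  have hc : (0:ℝ) < 1 / (8 * (2 * Real.pi) ^ 6) := by positivity
  exact div_pos (mul_pos hc (by linarith)) (denom_pos m hm q p)

lemma fC_lower (m : ℝ) (hm : 0 < m) (q p : R3) (hp : ‖q‖ + m ≤ ‖p‖) :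
    (1 / (8 * (2 * Real.pi) ^ 6)) / (64 * ω3 m q) * (‖p‖⁻¹) ^ 3 ≤ fC m q p := by
  set c : ℝ := 1 / (8 * (2 * Real.pi) ^ 6) with hcdef
  have hc : (0:ℝ) < c := by rw [hcdef]; positivity
  have hA0 : 0 < ω3 m p := lt_of_lt_of_le hm (m_le_omega m hm.le p)
  have hB0 : 0 < ω3 m (p + q) := lt_of_lt_of_le hm (m_le_omega m hm.le (p + q))
  have hC0 : 0 < ω3 m q := lt_of_lt_of_le hm (m_le_omega m hm.le q)
  have hx : 0 < ‖p‖ := lt_of_lt_of_le (by positivity) hp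
  have hA2x : ω3 m p ≤ 2 * ‖p‖ := by
    have := omega_le m hm.le p
    have hq0 : 0 ≤ ‖q‖ := norm_nonneg q
    linarith
  have hB2x : ω3 m (p + q) ≤ 2 * ‖p‖ := by
    have h1 := omega_le m hm.le (p + q)
    have h2 : ‖p + q‖ ≤ ‖p‖ + ‖q‖ := norm_add_le p q
    linarith
  have hAB4 : ω3 m p + ω3 m (p + q) ≤ 4 * ‖p‖ := by linarith
  have h1 : (ω3 m p + ω3 m (p + q)) ^ 2 - (ω3 m q) ^ 2 ≤ 16 * ‖p‖ ^ 2 := by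
    nlinarith [sq_nonneg (ω3 m q), hA0.le, hB0.le]
  have hABle : ω3 m p * ω3 m (p + q) ≤ 4 * ‖p‖ ^ 2 := by nlinarith
  have hlastpos : 0 < (ω3 m p + ω3 m (p + q)) ^ 2 - (ω3 m q) ^ 2 :=
    sub_pos.mpr (pow_lt_pow_left₀ (omega_triangle m hm q p) hC0.le two_ne_zero)
  have hDle : ω3 m p * ω3 m (p + q) * ω3 m q *
      ((ω3 m p + ω3 m (p + q)) ^ 2 - (ω3 m q) ^ 2) ≤ 64 * ω3 m q * ‖p‖ ^ 4 := by
    have h2 : ω3 m p * ω3 m (p + q) * ω3 m q ≤ 4 * ‖p‖ ^ 2 * ω3 m q :=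
      mul_le_mul_of_nonneg_right hABle hC0.le
    calc ω3 m p * ω3 m (p + q) * ω3 m q *
          ((ω3 m p + ω3 m (p + q)) ^ 2 - (ω3 m q) ^ 2)
        ≤ 4 * ‖p‖ ^ 2 * ω3 m q * (16 * ‖p‖ ^ 2) := by
          apply mul_le_mul h2 h1 hlastpos.le (by positivity)
      _ = 64 * ω3 m q * ‖p‖ ^ 4 := by ring
  have hnum : c * ‖p‖ ≤ c * (ω3 m p + ω3 m (p + q)) := by
    have : ‖p‖ ≤ ω3 m p + ω3 m (p + q) := by
      have := norm_le_omega m p; linarith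
    exact mul_le_mul_of_nonneg_left this hc.le
  have hmain : c * ‖p‖ / (64 * ω3 m q * ‖p‖ ^ 4) ≤ fC m q p := by
    unfold fC
    rw [← hcdef]
    exact div_le_div₀ (by positivity) hnum (denom_pos m hm q p) hDle
  have heq : c / (64 * ω3 m q) * (‖p‖⁻¹) ^ 3 = c * ‖p‖ / (64 * ω3 m q * ‖p‖ ^ 4) := by
    field_simp
  rw [heq]
  exact hmain

theorem stmt13 (m : ℝ) (hm : 0 < m) (q : R3) :
    (∀ p : R3, 0 ≤ fC m q p) ∧ ¬ Integrable (fC m q) := by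
  have hωq : 0 < ω3 m q := lt_of_lt_of_le hm (m_le_omega m hm.le q)
  refine ⟨fun p => (fC_pos m hm q p).le, ?_⟩
  intro h
  set R : ℝ := ‖q‖ + m with hRdef
  have hR : 0 < R := by positivity
  set ε : ℝ := (1 / (8 * (2 * Real.pi) ^ 6)) / (64 * ω3 m q) with hεdef
  have hε : 0 < ε := div_pos (by positivity) (by linarith)
  set A : ℕ → Set R3 :=
    fun k => Metric.ball 0 (2 ^ (k + 1) * R) \ Metric.ball 0 (2 ^ k * R) with hAdef
  have hAm : ∀ k, MeasurableSet (A k) :=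
    fun k => measurableSet_ball.diff measurableSet_ball
  have hdisj : ∀ k l : ℕ, k < l → Disjoint (A k) (A l) := by
    intro k l hkl
    apply Set.disjoint_left.mpr
    intro p hpk hpl
    have h1 : ‖p‖ < 2 ^ (k + 1) * R := by
      simpa [dist_zero_right] using hpk.1
    have h2 : ¬(‖p‖ < 2 ^ l * R) := by
      simpa [dist_zero_right] using hpl.2
    apply h2
    have hpow : (2:ℝ) ^ (k + 1) ≤ 2 ^ l := pow_le_pow_right₀ one_le_two hkl
    nlinarith
  have hAd : Pairwise (Function.onFun Disjoint A) := fun k l hne =>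
    hne.lt_or_gt.elim (hdisj k l) (fun hl => (hdisj l k hl).symm)
  have hmeasA : ∀ k : ℕ, volume (A k)
      = ENNReal.ofReal (7 * (2 ^ k * R) ^ 3) * volume (Metric.ball (0:R3) 1) := by
    intro k
    have hle : (2:ℝ) ^ k * R ≤ 2 ^ (k + 1) * R := by
      have : (2:ℝ) ^ k ≤ 2 ^ (k + 1) := pow_le_pow_right₀ one_le_two (Nat.le_succ k)
      nlinarith
    have hsub : Metric.ball (0:R3) (2 ^ k * R) ⊆ Metric.ball 0 (2 ^ (k + 1) * R) :=
      Metric.ball_subset_ball hle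
    rw [hAdef]
    rw [measure_diff hsub measurableSet_ball.nullMeasurableSet measure_ball_lt_top.ne]
    rw [Measure.addHaar_ball _ _ (by positivity : (0:ℝ) ≤ 2 ^ (k + 1) * R),
        Measure.addHaar_ball _ _ (by positivity : (0:ℝ) ≤ 2 ^ k * R)]
    rw [← ENNReal.sub_mul (fun _ _ => measure_ball_lt_top.ne),
        ← ENNReal.ofReal_sub _ (by positivity)]
    congr 2
    rw [finrank_euclideanSpace_fin, pow_succ]
    ring
  have hk : ∀ k : ℕ,
      ENNReal.ofReal (7 * ε / 8) * volume (Metric.ball (0:R3) 1)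
        ≤ ∫⁻ p in A k, ENNReal.ofReal (fC m q p) := by
    intro k
    have hc : ∀ p ∈ A k,
        ENNReal.ofReal (ε * ((2 ^ (k + 1) * R)⁻¹) ^ 3) ≤ ENNReal.ofReal (fC m q p) := by
      intro p hp
      apply ENNReal.ofReal_le_ofReal
      have h1 : 2 ^ k * R ≤ ‖p‖ := by
        have := hp.2
        simp only [Metric.mem_ball, dist_zero_right, not_lt] at this
        exact this
      have h2 : ‖p‖ < 2 ^ (k + 1) * R := by
        have := hp.1
        simpa [dist_zero_right] using this
      have hpR : R ≤ ‖p‖ := by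
        have hone : (1:ℝ) ≤ 2 ^ k := one_le_pow₀ one_le_two
        nlinarith
      have hlow := fC_lower m hm q p hpR
      have hmono : ((2 ^ (k + 1) * R)⁻¹) ^ 3 ≤ (‖p‖⁻¹) ^ 3 := by
        apply pow_le_pow_left₀ (by positivity)
        apply inv_anti₀ (lt_of_lt_of_le hR hpR) h2.le
      calc ε * ((2 ^ (k + 1) * R)⁻¹) ^ 3 ≤ ε * (‖p‖⁻¹) ^ 3 :=
            mul_le_mul_of_nonneg_left hmono hε.le
        _ ≤ fC m q p := hlow
    have hkey : ENNReal.ofReal (7 * ε / 8) * volume (Metric.ball (0:R3) 1)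
        = ENNReal.ofReal (ε * ((2 ^ (k + 1) * R)⁻¹) ^ 3) * volume (A k) := by
      rw [hmeasA k, ← mul_assoc, ← ENNReal.ofReal_mul (by positivity)]
      congr 2
      have hr1 : (0:ℝ) < 2 ^ k * R := by positivity
      rw [pow_succ]
      field_simp
      ring
    calc ENNReal.ofReal (7 * ε / 8) * volume (Metric.ball (0:R3) 1)
        = ENNReal.ofReal (ε * ((2 ^ (k + 1) * R)⁻¹) ^ 3) * volume (A k) := hkey
      _ = ∫⁻ _ in A k, ENNReal.ofReal (ε * ((2 ^ (k + 1) * R)⁻¹) ^ 3) :=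
          (setLIntegral_const _ _).symm
      _ ≤ ∫⁻ p in A k, ENNReal.ofReal (fC m q p) := setLIntegral_mono' (hAm k) hc
  have hne : ENNReal.ofReal (7 * ε / 8) * volume (Metric.ball (0:R3) 1) ≠ 0 :=
    mul_ne_zero (ENNReal.ofReal_pos.mpr (by positivity)).ne'
      (Metric.measure_ball_pos volume 0 one_pos).ne'
  have htop : (⊤:ENNReal) ≤ ∫⁻ p, ENNReal.ofReal (fC m q p) := by
    have hU : ∫⁻ p in ⋃ k, A k, ENNReal.ofReal (fC m q p)
        = ∑' k, ∫⁻ p in A k, ENNReal.ofReal (fC m q p) :=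
      lintegral_iUnion hAm hAd _
    calc (⊤:ENNReal)
        = ∑' _ : ℕ, ENNReal.ofReal (7 * ε / 8) * volume (Metric.ball (0:R3) 1) :=
          (ENNReal.tsum_const_eq_top_of_ne_zero hne).symm
      _ ≤ ∑' k, ∫⁻ p in A k, ENNReal.ofReal (fC m q p) := ENNReal.tsum_le_tsum hk
      _ = ∫⁻ p in ⋃ k, A k, ENNReal.ofReal (fC m q p) := hU.symm
      _ ≤ ∫⁻ p, ENNReal.ofReal (fC m q p) := setLIntegral_le_lintegral _ _
  have hfin := (hasFiniteIntegral_iff_ofReal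
      (ae_of_all _ fun p => (fC_pos m hm q p).le)).mp h.2
  exact absurd hfin (by simp [top_le_iff.mp htop])
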